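/- Let n ≥ 1 and let A be a symmetric n×n integer matrix such that every row sums to zero. Then all cofactors of A are equal; that is, for all indices i, j, k, l, the (i,j)-cofactor (-1)^{i+j} det(A with row i and column j deleted) equals the (k,l)-cofactor. -/
import Mathlib

open Matrix

lemma det_eq_zero_of_row_sum_zero {m : ℕ} (B : Matrix (Fin (m + 1)) (Fin (m + 1)) ℤ)
    (h : ∀ r, ∑ c, B r c = 0) : B.det = 0 := by
  rw [← Matrix.exists_mulVec_eq_zero_iff]
  refine ⟨fun _ => 1, ?_, ?_⟩
  · intro h0
    have := congrFun h0 0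
    simp at this
  · funext r
    simpa [Matrix.mulVec, dotProduct] using h r

lemma det_cons_single {n : ℕ} (M : Fin n → Fin (n + 1) → ℤ) (j : Fin (n + 1)) :
    (Matrix.of (Fin.cons (Pi.single j 1) M)).det
      = (-1 : ℤ) ^ (j : ℕ) * ((Matrix.of M).submatrix id j.succAbove).det := by
  rw [Matrix.det_succ_row_zero]
  rw [Fintype.sum_eq_single j]
  · simp [Matrix.submatrix]
  · intro c hc
    simp [Pi.single_apply, Ne.symm hc]

lemma col_cofactor_const {n : ℕ} (M : Fin n → Fin (n + 1) → ℤ)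
    (h : ∀ r, ∑ c, M r c = 0) (j l : Fin (n + 1)) :
    (-1 : ℤ) ^ (j : ℕ) * ((Matrix.of M).submatrix id j.succAbove).det
      = (-1 : ℤ) ^ (l : ℕ) * ((Matrix.of M).submatrix id l.succAbove).det := by
  rw [← det_cons_single, ← det_cons_single]
  have key : ∀ v : Fin (n + 1) → ℤ,
      Matrix.of (Fin.cons v M) = Matrix.updateRow (Matrix.of (Fin.cons 0 M)) 0 v := by
    intro v
    ext r c
    refine Fin.cases ?_ ?_ r <;> simp [Matrix.updateRow_apply, Fin.succ_ne_zero]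
  rw [key (Pi.single j 1), key (Pi.single l 1)]
  have hdiff : (Matrix.updateRow (Matrix.of (Fin.cons (0 : Fin (n+1) → ℤ) M)) 0
      (Pi.single j 1 - Pi.single l 1)).det = 0 := by
    apply det_eq_zero_of_row_sum_zero
    intro r
    refine Fin.cases ?_ ?_ r
    · simp [Finset.sum_sub_distrib]
    · intro r'
      simpa [Matrix.updateRow_apply, Fin.succ_ne_zero] using h r'
  have := Matrix.det_updateRow_add (Matrix.of (Fin.cons (0 : Fin (n+1) → ℤ) M)) 0
      (Pi.single l 1) (Pi.single j 1 - Pi.single l 1)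
  rw [add_sub_cancel] at this
  rw [this, hdiff, add_zero]

lemma cofactor_symm {n : ℕ} (A : Matrix (Fin (n + 1)) (Fin (n + 1)) ℤ)
    (hsym : A.IsSymm) (i j : Fin (n + 1)) :
    (A.submatrix i.succAbove j.succAbove).det = (A.submatrix j.succAbove i.succAbove).det := by
  rw [← Matrix.det_transpose (A.submatrix j.succAbove i.succAbove)]
  congr 1
  ext r c
  simp [Matrix.transpose_apply]
  exact (congrFun (congrFun hsym _) _).symm

/-- All cofactors of a symmetric integer matrix with zero row sums are equal. -/
theorem all_cofactors_equal (n : ℕ) (A : Matrix (Fin (n + 1)) (Fin (n + 1)) ℤ)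
    (hsym : A.IsSymm) (hrow : ∀ i, ∑ j, A i j = 0) :
    ∀ i j k l : Fin (n + 1),
      (-1 : ℤ) ^ ((i : ℕ) + (j : ℕ)) * (A.submatrix i.succAbove j.succAbove).det =
        (-1 : ℤ) ^ ((k : ℕ) + (l : ℕ)) * (A.submatrix k.succAbove l.succAbove).det := by
  have step : ∀ i j l : Fin (n + 1),
      (-1 : ℤ) ^ ((i : ℕ) + (j : ℕ)) * (A.submatrix i.succAbove j.succAbove).det =
        (-1 : ℤ) ^ ((i : ℕ) + (l : ℕ)) * (A.submatrix i.succAbove l.succAbove).det := by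
    intro i j l
    have := col_cofactor_const (fun r c => A (i.succAbove r) c)
      (fun r => hrow (i.succAbove r)) j l
    have hj : (Matrix.of (fun r c => A (i.succAbove r) c)).submatrix id j.succAbove
        = A.submatrix i.succAbove j.succAbove := rfl
    have hl : (Matrix.of (fun r c => A (i.succAbove r) c)).submatrix id l.succAbove
        = A.submatrix i.succAbove l.succAbove := rfl
    rw [hj, hl] at this
    rw [pow_add, pow_add, mul_assoc, mul_assoc, this]
  have symm : ∀ i j : Fin (n + 1),
      (-1 : ℤ) ^ ((i : ℕ) + (j : ℕ)) * (A.submatrix i.succAbove j.succAbove).det =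
        (-1 : ℤ) ^ ((j : ℕ) + (i : ℕ)) * (A.submatrix j.succAbove i.succAbove).det := by
    intro i j
    rw [cofactor_symm A hsym, Nat.add_comm]
  intro i j k l
  rw [step i j l, symm i l, step l i k, symm l k]
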